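/- arXiv:0901.4067 — 4 statements merged into one kernel-verified Lean document; each statement's English description precedes it below -/
import Mathlib

section
/- Let g_t be a one-parameter group of diffeomorphisms of a compact manifold N, and β a 1-form on N with g_t* β = e^{-κt} β for all t with κ > 0. If the flow is distal in the sense that there exists c > 0 and a Riemannian metric with ‖(g_t)_* ξ‖ ≥ c‖ξ‖ for all tangent vectors ξ and all t ≥ 0, then β = 0. -/
/-- Lemma 1 with distality: if g_t is a one-parameter group of
diffeomorphisms of a compact manifold N, β a 1-form with g_t*β = e^{-κt}β (κ > 0),
and the flow is distal (‖(g_t)_* ξ‖ ≥ c‖ξ‖ for some c > 0, all t ≥ 0), then β = 0.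
Encoding: the tangent bundle is trivialized by a normed space E; `A t x` is the
differential of g_t at x (invertible, hence surjective); `hpull` expresses
(g_t*β)(x)(ξ) = β(g_t x)(A t x ξ) = e^{-κt} β(x)(ξ). -/
theorem stmt12 {N : Type*} [TopologicalSpace N] [CompactSpace N]
    {E : Type*} [NormedAddCommGroup E] [NormedSpace ℝ E]
    (g : ℝ → N → N) (hgsurj : ∀ t, Function.Surjective (g t))
    (A : ℝ → N → E →L[ℝ] E) (hAsurj : ∀ t x, Function.Surjective (A t x))
    (β : N → E →L[ℝ] ℝ) (hβ : Continuous β)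
    (κ c : ℝ) (hκ : 0 < κ) (hc : 0 < c)
    (hpull : ∀ t ≥ (0:ℝ), ∀ x ξ, β (g t x) (A t x ξ) = Real.exp (-κ * t) * β x ξ)
    (hdistal : ∀ t ≥ (0:ℝ), ∀ x ξ, c * ‖ξ‖ ≤ ‖A t x ξ‖) :
    ∀ x, β x = 0 := by
  intro x
  -- N is nonempty, get a maximizer of ‖β ·‖
  have : Nonempty N := ⟨x⟩
  obtain ⟨x₀, hx₀'⟩ := (continuous_norm.comp hβ).exists_forall_ge
    (by rw [Filter.cocompact_eq_bot]; exact Filter.tendsto_bot)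
  set M := ‖β x₀‖ with hM
  have hM0 : 0 ≤ M := norm_nonneg _
  -- choose t with e^{-κ t} < c
  set t : ℝ := max 0 ((1 - Real.log c) / κ) with ht
  have ht0 : 0 ≤ t := le_max_left _ _
  have hexp : Real.exp (-κ * t) < c := by
    have h1 : (1 - Real.log c) / κ ≤ t := le_max_right _ _
    have h2 : -κ * t ≤ Real.log c - 1 := by
      have := (div_le_iff₀ hκ).mp h1
      nlinarith
    calc Real.exp (-κ * t) ≤ Real.exp (Real.log c - 1) := Real.exp_le_exp.mpr h2
      _ = c * Real.exp (-1) := by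
          rw [Real.exp_sub, Real.exp_log hc]; ring_nf; rw [Real.exp_neg]
      _ < c * 1 := by
          have : Real.exp (-1) < 1 := Real.exp_lt_one_iff.mpr (by norm_num)
          nlinarith
      _ = c := mul_one c
  -- bound ‖β y‖ for all y
  have key : ∀ y, ‖β y‖ ≤ Real.exp (-κ * t) / c * M := by
    intro y
    obtain ⟨z, hz⟩ := hgsurj t y
    apply ContinuousLinearMap.opNorm_le_bound
    · positivity
    · intro η
      obtain ⟨ξ, hξ⟩ := hAsurj t z η
      have h1 : β y η = Real.exp (-κ * t) * β z ξ := by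
        rw [← hz, ← hξ]; exact hpull t ht0 z ξ
      have h2 : |β z ξ| ≤ M * ‖ξ‖ := by
        calc |β z ξ| = ‖β z ξ‖ := rfl
          _ ≤ ‖β z‖ * ‖ξ‖ := (β z).le_opNorm ξ
          _ ≤ M * ‖ξ‖ := by gcongr; exact hx₀' z
      have h3 : c * ‖ξ‖ ≤ ‖η‖ := by rw [← hξ]; exact hdistal t ht0 z ξ
      have hE : Real.exp (-κ * t) > 0 := Real.exp_pos _
      calc ‖β y η‖ = Real.exp (-κ * t) * |β z ξ| := by
            rw [h1]; rw [Real.norm_eq_abs, abs_mul, abs_of_pos hE]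
        _ ≤ Real.exp (-κ * t) * (M * ‖ξ‖) := by gcongr
        _ ≤ Real.exp (-κ * t) / c * M * ‖η‖ := by
            rw [div_mul_eq_mul_div, div_mul_eq_mul_div, le_div_iff₀ hc]
            nlinarith [mul_le_mul_of_nonneg_left h3 (mul_nonneg hE.le hM0)]
  -- conclude M = 0
  have hMle : M ≤ Real.exp (-κ * t) / c * M := key x₀
  have hlt1 : Real.exp (-κ * t) / c < 1 := (div_lt_one hc).mpr hexp
  have hMzero : M = 0 := by nlinarith
  have : ‖β x‖ ≤ 0 := hMzero ▸ hx₀' x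
  exact norm_le_zero_iff.mp this
end

section
/- Let N ⊆ M be a submanifold of a symplectic manifold (M, Ω) which is isotropic (Ω restricted to TN vanishes), and let X be a vector field on M tangent to N. Then in a tubular neighbourhood of N there exists a smooth function H vanishing on N such that at every point of N, X coincides with the Hamiltonian vector field of H (i_X Ω = -dH along N). -/
/-- If X is a vector field tangent to an isotropic submanifold N of a
symplectic manifold (M, Ω), then in a tubular neighbourhood of N there is a function H
vanishing on N with X = JdH along N, i.e. i_X Ω = -dH at every point of N.
Encoding in the tubular-neighbourhood model: M = F × G with N = F × {0}
(F the tangent directions of N, G the normal bundle fiber); Ω is a smooth field of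
antisymmetric bilinear forms, isotropy of N is `hiso`, and tangency of X is `htang`. -/
theorem stmt13 {F G : Type*} [NormedAddCommGroup F] [NormedSpace ℝ F]
    [NormedAddCommGroup G] [NormedSpace ℝ G]
    (Ω : F × G → (F × G) →L[ℝ] (F × G) →L[ℝ] ℝ) (hΩ : Differentiable ℝ Ω)
    (hanti : ∀ p u v, Ω p u v = -Ω p v u)
    (hiso : ∀ x : F, ∀ ξ ξ' : F, Ω (x, 0) (ξ, 0) (ξ', 0) = 0)
    (X : F × G → F × G) (hX : Differentiable ℝ X)
    (htang : ∀ x : F, (X (x, 0)).2 = 0) :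
    ∃ H : F × G → ℝ, (∀ x : F, H (x, 0) = 0) ∧
      ∀ x : F, ∀ v : F × G, Ω (x, 0) (X (x, 0)) v = -(fderiv ℝ H (x, 0)) v := by
  -- the fiber dilation field W p = (0, p.2), as a continuous linear map
  set W : (F × G) →L[ℝ] (F × G) :=
    (0 : (F × G) →L[ℝ] F).prod (ContinuousLinearMap.snd ℝ F G) with hW
  have hWapp : ∀ p : F × G, W p = ((0 : F), p.2) := fun p => rfl
  -- the 1-form σ = i_X Ω
  set c : F × G → (F × G) →L[ℝ] ℝ := fun p => Ω p (X p) with hc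
  have hcdiff : Differentiable ℝ c := hΩ.clm_apply hX
  refine ⟨fun p => -(c p (W p)), fun x => by simp [hWapp]; exact (c (x, 0)).map_zero, fun x v => ?_⟩
  set p₀ : F × G := (x, 0) with hp₀
  have hW0 : W p₀ = 0 := by
    rw [hWapp]; simp [hp₀]
  have hder : HasFDerivAt (fun p => c p (W p))
      (((c p₀).comp W) + (fderiv ℝ c p₀).flip (W p₀)) p₀ :=
    (hcdiff p₀).hasFDerivAt.clm_apply (W.hasFDerivAt)
  have hder' : HasFDerivAt (fun p => -(c p (W p))) (-(((c p₀).comp W))) p₀ := by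
    have := hder.neg
    rw [hW0] at this
    simp at this; exact this
  rw [hder'.fderiv]
  have hsplit : v = (v.1, (0:G)) + ((0:F), v.2) := by simp
  have hX0 : X p₀ = ((X p₀).1, (0:G)) := by
    rw [hp₀]; exact Prod.ext rfl (htang x)
  calc Ω p₀ (X p₀) v = Ω p₀ (X p₀) ((v.1, (0:G)) + ((0:F), v.2)) := by rw [← hsplit]
    _ = Ω p₀ (X p₀) (v.1, (0:G)) + Ω p₀ (X p₀) ((0:F), v.2) := by
        rw [map_add]
    _ = Ω p₀ (X p₀) ((0:F), v.2) := by
        rw [hX0, hp₀, hiso x (X p₀).1 v.1, zero_add]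
    _ = -(-((c p₀).comp W)) v := by
        simp [hc, hWapp]
end

section
/- Let σ be a 1-form on a manifold M vanishing on all vectors tangent to a connected smooth submanifold N ⊆ M. Then in a tubular neighbourhood of N there exists a smooth function H with H|_N = 0 and dH|_{T_N M} = σ|_{T_N M} (the differential of H agrees with σ at every point of N, on all of T_x M). -/
/-- Lemma 3: if a 1-form σ vanishes on all vectors tangent to a
submanifold N ⊆ M, then in a tubular neighbourhood of N there is a function H with
H|_N = 0 whose differential agrees with σ at every point of N (on all of T_x M).
Encoding in the tubular-neighbourhood model: M = F × G, N = F × {0};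
`hvan` is σ|_{TN} = 0; H = i_W σ with W the fiber dilation field. -/
theorem stmt14 {F G : Type*} [NormedAddCommGroup F] [NormedSpace ℝ F]
    [NormedAddCommGroup G] [NormedSpace ℝ G]
    (σ : F × G → (F × G) →L[ℝ] ℝ) (hσ : Differentiable ℝ σ)
    (hvan : ∀ x : F, ∀ ξ : F, σ (x, 0) (ξ, 0) = 0) :
    ∃ H : F × G → ℝ, (∀ x : F, H (x, 0) = 0) ∧
      ∀ x : F, fderiv ℝ H (x, 0) = σ (x, 0) := by
  -- W(p) = (0, p.2) as a continuous linear map on F × G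
  set W : (F × G) →L[ℝ] (F × G) :=
    (ContinuousLinearMap.inr ℝ F G).comp (ContinuousLinearMap.snd ℝ F G) with hW
  refine ⟨fun p => σ p (W p), ?_, ?_⟩
  · intro x
    simp [hW]
    exact (σ (x, 0)).map_zero
  · intro x
    have hu : DifferentiableAt ℝ (fun p : F × G => W p) (x, 0) := W.differentiableAt
    rw [fderiv_clm_apply (hσ (x, 0)) hu]
    have hW0 : W (x, 0) = 0 := by simp [hW]
    have hfW : fderiv ℝ (fun p : F × G => W p) (x, 0) = W := W.fderiv
    refine ContinuousLinearMap.ext fun v => ?_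
    simp only [ContinuousLinearMap.add_apply, ContinuousLinearMap.flip_apply,
      ContinuousLinearMap.comp_apply, hW0, hfW, map_zero, zero_add]
    have : σ (x, 0) v = σ (x, 0) (v.1, 0) + σ (x, 0) (0, v.2) := by
      rw [← map_add]
      congr 1
      simp
    rw [this, hvan x v.1, zero_add]
    simp [hW]
end

section
/- Consider the CD-system on T*ℝⁿ with equations dp/dt = -∂H/∂q - κ(p - ∂S/∂q), dq/dt = ∂H/∂p, where S = S(q, t) and H = H(p, q, t). The submanifold {p = ∂S/∂q} is invariant under the flow if and only if S satisfies the Hamilton-Jacobi equation H(∂S/∂q, q, t) + ∂S/∂t = f(t) for some function f of time only; on this invariant submanifold the dynamics coincides with the Hamiltonian flow of H. -/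
open InnerProductSpace RealInnerProductSpace ContinuousLinearMap

noncomputable section
abbrev Ee (n : ℕ) := EuclideanSpace ℝ (Fin n)

variable {n : ℕ} {G : Type*} [NormedAddCommGroup G] [NormedSpace ℝ G]

/-- `L ↦ (toDual).symm (L ∘ inl)` as a continuous linear map. -/
def Phi (n : ℕ) (G : Type*) [NormedAddCommGroup G] [NormedSpace ℝ G] :
    ((Ee n × G) →L[ℝ] ℝ) →L[ℝ] Ee n :=
  ((InnerProductSpace.toDual ℝ (Ee n)).symm.toContinuousLinearEquiv.toContinuousLinearMap).comp
    ((ContinuousLinearMap.compL ℝ (Ee n) (Ee n × G) ℝ).flip (ContinuousLinearMap.inl ℝ (Ee n) G))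

lemma inner_Phi (L : (Ee n × G) →L[ℝ] ℝ) (v : Ee n) : ⟪Phi n G L, v⟫ = L (v, 0) := by
  simp [Phi, InnerProductSpace.toDual_symm_apply]

lemma grad_fst (F : Ee n × G → ℝ) (hF : ContDiff ℝ (⊤ : ℕ∞) F) (q : Ee n) (t : G) :
    gradient (fun q' => F (q', t)) q = Phi n G (fderiv ℝ F (q, t)) := by
  have h1 : HasFDerivAt (fun q' : Ee n => (q', t)) (ContinuousLinearMap.inl ℝ (Ee n) G) q := by
    have h : HasFDerivAt (fun q' : Ee n => (q', t))
        ((ContinuousLinearMap.id ℝ (Ee n)).prod (0 : Ee n →L[ℝ] G)) q :=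
      HasFDerivAt.prodMk (hasFDerivAt_id q) (hasFDerivAt_const t q)
    have e : (ContinuousLinearMap.id ℝ (Ee n)).prod (0 : Ee n →L[ℝ] G)
        = ContinuousLinearMap.inl ℝ (Ee n) G := by ext v <;> simp
    rwa [e] at h
  have h2 : HasFDerivAt F (fderiv ℝ F (q, t)) (q, t) :=
    (hF.differentiable (by simp) (q, t)).hasFDerivAt
  have h3 : HasFDerivAt (fun q' => F (q', t))
      ((fderiv ℝ F (q, t)).comp (ContinuousLinearMap.inl ℝ (Ee n) G)) q := h2.comp q h1
  apply ext_inner_right ℝ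
  intro v
  rw [inner_Phi]
  show ⟪gradient (fun q' => F (q', t)) q, v⟫ = _
  rw [show gradient (fun q' => F (q', t)) q
      = (InnerProductSpace.toDual ℝ (Ee n)).symm (fderiv ℝ (fun q' => F (q', t)) q) from rfl,
    InnerProductSpace.toDual_symm_apply, h3.fderiv]
  simp

/-- Inner product with a gradient along an embedding. -/
lemma inner_gradient_along {X : Type*} [NormedAddCommGroup X] [NormedSpace ℝ X]
    (f : X → ℝ) (hf : ContDiff ℝ (⊤ : ℕ∞) f) (ι : Ee n → X) (J : Ee n →L[ℝ] X) (q : Ee n)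
    (hι : HasFDerivAt ι J q) (v : Ee n) :
    ⟪gradient (fun q' => f (ι q')) q, v⟫ = fderiv ℝ f (ι q) (J v) := by
  have h3 : HasFDerivAt (fun q' => f (ι q')) ((fderiv ℝ f (ι q)).comp J) q :=
    ((hf.differentiable (by simp) (ι q)).hasFDerivAt).comp q hι
  rw [show gradient (fun q' => f (ι q')) q
      = (InnerProductSpace.toDual ℝ (Ee n)).symm (fderiv ℝ (fun q' => f (ι q')) q) from rfl,
    InnerProductSpace.toDual_symm_apply, h3.fderiv]
  rfl

lemma deriv_snd (F : Ee n × ℝ → ℝ) (hF : ContDiff ℝ (⊤ : ℕ∞) F) (q : Ee n) (t : ℝ) :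
    deriv (fun s => F (q, s)) t = fderiv ℝ F (q, t) (0, 1) := by
  have h1 : HasDerivAt (fun s : ℝ => (q, s)) ((0 : Ee n), (1 : ℝ)) t :=
    HasDerivAt.prodMk (hasDerivAt_const t q) (hasDerivAt_id t)
  have h2 : HasFDerivAt F (fderiv ℝ F (q, t)) (q, t) :=
    (hF.differentiable (by simp) (q, t)).hasFDerivAt
  exact (h2.comp_hasDerivAt t h1).deriv



/-- For the CD-system dp/dt = -∂H/∂q - κ(p - ∂S/∂q), dq/dt = ∂H/∂p on
T*ℝⁿ, the submanifold {p = ∂S/∂q} is invariant iff S satisfies the Hamilton–Jacobi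
equation H(∂S/∂q, q, t) + ∂S/∂t = f(t) for some function f of time only; and on this
invariant submanifold the dynamics is the Hamiltonian flow of H (the dissipative force
vanishes there).  Invariance is expressed as tangency of the extended vector field
(Vp, Vq, 1) to the graph p = ∂S/∂q (∂S/∂q is realized as the gradient W of S in q). -/
theorem stmt16 (n : ℕ) (κ : ℝ) (hκ : 0 < κ)
    (H : EuclideanSpace ℝ (Fin n) → EuclideanSpace ℝ (Fin n) → ℝ → ℝ)
    (S : EuclideanSpace ℝ (Fin n) → ℝ → ℝ)
    (hH : ContDiff ℝ (⊤ : ℕ∞) (fun x : EuclideanSpace ℝ (Fin n) × EuclideanSpace ℝ (Fin n) × ℝ =>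
      H x.1 x.2.1 x.2.2))
    (hS : ContDiff ℝ (⊤ : ℕ∞) (fun x : EuclideanSpace ℝ (Fin n) × ℝ => S x.1 x.2)) :
    let W : EuclideanSpace ℝ (Fin n) → ℝ → EuclideanSpace ℝ (Fin n) :=
      fun q t => gradient (fun q' => S q' t) q
    let St : EuclideanSpace ℝ (Fin n) → ℝ → ℝ := fun q t => deriv (fun s => S q s) t
    let Vp : EuclideanSpace ℝ (Fin n) → EuclideanSpace ℝ (Fin n) → ℝ → EuclideanSpace ℝ (Fin n) :=
      fun p q t => -(gradient (fun q' => H p q' t) q) - κ • (p - W q t)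
    let Vq : EuclideanSpace ℝ (Fin n) → EuclideanSpace ℝ (Fin n) → ℝ → EuclideanSpace ℝ (Fin n) :=
      fun p q t => gradient (fun p' => H p' q t) p
    let Invariant : Prop :=
      ∀ (q : EuclideanSpace ℝ (Fin n)) (t : ℝ),
        fderiv ℝ (fun x : EuclideanSpace ℝ (Fin n) × ℝ => W x.1 x.2) (q, t)
            (Vq (W q t) q t, 1) = Vp (W q t) q t
    (Invariant ↔ ∃ f : ℝ → ℝ, ∀ (q : EuclideanSpace ℝ (Fin n)) (t : ℝ),
        H (W q t) q t + St q t = f t) ∧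
    (Invariant → ∀ (q : EuclideanSpace ℝ (Fin n)) (t : ℝ),
        Vp (W q t) q t = -(gradient (fun q' => H (W q t) q' t) q)) := by
  intro W St Vp Vq Invariant
  -- the joint function and its derivatives
  set F : Ee n × ℝ → ℝ := fun x => S x.1 x.2 with hFdef
  set D : Ee n × ℝ → (Ee n × ℝ →L[ℝ] ℝ) := fderiv ℝ F with hDdef
  have hD : ContDiff ℝ (⊤ : ℕ∞) D := hS.fderiv_right (by simp)
  set f'' : Ee n × ℝ → (Ee n × ℝ →L[ℝ] (Ee n × ℝ →L[ℝ] ℝ)) := fderiv ℝ D with hf''def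
  have hDfd : ∀ x, HasFDerivAt D (f'' x) x := fun x => (hD.differentiable (by simp) x).hasFDerivAt
  have hsym : ∀ x a b, f'' x a b = f'' x b a := fun x =>
    second_derivative_symmetric (fun y => (hS.differentiable (by simp) y).hasFDerivAt) (hDfd x)
  -- W in terms of D
  have hWeq : ∀ (q : Ee n) (t : ℝ), W q t = Phi n ℝ (D (q, t)) := fun q t => grad_fst F hS q t
  have hWext : (fun x : Ee n × ℝ => W x.1 x.2) = fun x => Phi n ℝ (D x) := by
    funext x; exact hWeq x.1 x.2
  have hWfd : ∀ x : Ee n × ℝ, HasFDerivAt (fun y : Ee n × ℝ => W y.1 y.2)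
      ((Phi n ℝ).comp (f'' x)) x := by
    intro x
    rw [hWext]
    exact ((Phi n ℝ).hasFDerivAt).comp x (hDfd x)
  have hSt : ∀ (q : Ee n) (t : ℝ), St q t = D (q, t) (0, 1) := fun q t => deriv_snd F hS q t
  -- the Hamiltonian and its partial gradients
  set Hh : Ee n × Ee n × ℝ → ℝ := fun y => H y.1 y.2.1 y.2.2 with hHhdef
  set DH : Ee n × Ee n × ℝ → (Ee n × Ee n × ℝ →L[ℝ] ℝ) := fderiv ℝ Hh with hDHdef
  have gradP : ∀ (p q : Ee n) (t : ℝ) (v : Ee n),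
      ⟪gradient (fun p' => H p' q t) p, v⟫_ℝ = DH (p, q, t) (v, 0, 0) := by
    intro p q t v
    have := grad_fst (G := Ee n × ℝ) Hh hH p (q, t)
    rw [show gradient (fun p' => H p' q t) p = gradient (fun p' => Hh (p', (q, t))) p from rfl,
      this, inner_Phi]
    rfl
  have gradQ : ∀ (p q : Ee n) (t : ℝ) (v : Ee n),
      ⟪gradient (fun q' => H p q' t) q, v⟫_ℝ = DH (p, q, t) (0, v, 0) := by
    intro p q t v
    have hι : HasFDerivAt (fun q' : Ee n => (p, q', t))
        ((0 : Ee n →L[ℝ] Ee n).prod (((ContinuousLinearMap.id ℝ (Ee n))).prod (0 : Ee n →L[ℝ] ℝ))) q :=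
      HasFDerivAt.prodMk (hasFDerivAt_const p q) (HasFDerivAt.prodMk (hasFDerivAt_id q) (hasFDerivAt_const t q))
    have := inner_gradient_along Hh hH (fun q' : Ee n => (p, q', t)) _ q hι v
    exact this
  -- the Hamilton–Jacobi function g and its derivative
  set Ap : (Ee n × ℝ →L[ℝ] ℝ) →L[ℝ] ℝ := ContinuousLinearMap.apply ℝ ℝ ((0 : Ee n), (1 : ℝ))
    with hApdef
  set g : Ee n × ℝ → ℝ := fun x => H (W x.1 x.2) x.1 x.2 + D x (0, 1) with hgdef
  set G' : Ee n → ℝ → (Ee n × ℝ →L[ℝ] ℝ) := fun q t =>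
    (DH (W q t, q, t)).comp (((Phi n ℝ).comp (f'' (q, t))).prod
      (ContinuousLinearMap.id ℝ (Ee n × ℝ))) + Ap.comp (f'' (q, t)) with hG'def
  have hgfd : ∀ (q : Ee n) (t : ℝ), HasFDerivAt g (G' q t) (q, t) := by
    intro q t
    have hf1 : HasFDerivAt (fun x : Ee n × ℝ => ((W x.1 x.2, x) : Ee n × (Ee n × ℝ)))
        (((Phi n ℝ).comp (f'' (q, t))).prod (ContinuousLinearMap.id ℝ (Ee n × ℝ))) (q, t) :=
      (hWfd (q, t)).prodMk (hasFDerivAt_id (q, t))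
    have h1 : HasFDerivAt (fun x : Ee n × ℝ => Hh (W x.1 x.2, x))
        ((DH (W q t, q, t)).comp (((Phi n ℝ).comp (f'' (q, t))).prod
          (ContinuousLinearMap.id ℝ (Ee n × ℝ)))) (q, t) :=
      HasFDerivAt.comp (g := Hh)
        (f := fun x : Ee n × ℝ => ((W x.1 x.2, x) : Ee n × (Ee n × ℝ))) (q, t)
        ((hH.differentiable (by simp) ((W q t, q, t) : Ee n × Ee n × ℝ)).hasFDerivAt) hf1
    have h2 : HasFDerivAt (fun x : Ee n × ℝ => D x (0, 1)) (Ap.comp (f'' (q, t))) (q, t) :=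
      (Ap.hasFDerivAt).comp (q, t) (hDfd (q, t))
    exact h1.add h2
  -- key pointwise identity
  have hkey : ∀ (q : Ee n) (t : ℝ) (v : Ee n),
      G' q t (v, 0) = ⟪Phi n ℝ (f'' (q, t) (Vq (W q t) q t, 1))
        + gradient (fun q' => H (W q t) q' t) q, v⟫_ℝ := by
    intro q t v
    have hsplit : ((Phi n ℝ (f'' (q, t) (v, 0)), v, (0 : ℝ)) : Ee n × Ee n × ℝ)
        = (Phi n ℝ (f'' (q, t) (v, 0)), 0, 0) + (0, v, 0) := by
      simp [Prod.ext_iff]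
    have e1 : G' q t (v, 0) = DH (W q t, q, t) (Phi n ℝ (f'' (q, t) (v, 0)), v, 0)
        + f'' (q, t) (v, 0) (0, 1) := rfl
    rw [e1, hsplit, map_add]
    have e2 : DH (W q t, q, t) (Phi n ℝ (f'' (q, t) (v, 0)), 0, 0)
        = f'' (q, t) (v, 0) (Vq (W q t) q t, 0) := by
      rw [← gradP (W q t) q t (Phi n ℝ (f'' (q, t) (v, 0))),
        real_inner_comm, inner_Phi]
    have e3 : DH (W q t, q, t) ((0 : Ee n), v, (0 : ℝ))
        = ⟪gradient (fun q' => H (W q t) q' t) q, v⟫_ℝ := (gradQ (W q t) q t v).symm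
    rw [e2, e3]
    have e4 : f'' (q, t) (v, 0) (Vq (W q t) q t, 0) + f'' (q, t) (v, 0) (0, 1)
        = f'' (q, t) (v, 0) (Vq (W q t) q t, 1) := by
      rw [← map_add]
      norm_num
    have e5 : f'' (q, t) (v, 0) (Vq (W q t) q t, 1)
        = ⟪Phi n ℝ (f'' (q, t) (Vq (W q t) q t, 1)), v⟫_ℝ := by
      rw [inner_Phi, hsym (q, t)]
    rw [inner_add_left, ← e5, ← e4]
    ring
  -- value of Vp on the graph
  have hVp : ∀ (q : Ee n) (t : ℝ),
      Vp (W q t) q t = -(gradient (fun q' => H (W q t) q' t) q) := by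
    intro q t
    show -(gradient (fun q' => H (W q t) q' t) q) - κ • (W q t - W q t) = _
    rw [sub_self, smul_zero, sub_zero]
  -- invariance at a point iff the q-derivative of g vanishes
  have hinv_iff : ∀ (q : Ee n) (t : ℝ),
      (fderiv ℝ (fun x : Ee n × ℝ => W x.1 x.2) (q, t) (Vq (W q t) q t, 1) = Vp (W q t) q t)
        ↔ ∀ v : Ee n, G' q t (v, 0) = 0 := by
    intro q t
    rw [(hWfd (q, t)).fderiv, hVp q t]
    constructor
    · intro h v
      rw [hkey]
      have : Phi n ℝ (f'' (q, t) (Vq (W q t) q t, 1))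
          + gradient (fun q' => H (W q t) q' t) q = 0 := by
        rw [show Phi n ℝ (f'' (q, t) (Vq (W q t) q t, 1))
            = ((Phi n ℝ).comp (f'' (q, t))) (Vq (W q t) q t, 1) from rfl, h]
        simp
      rw [this, inner_zero_left]
    · intro h
      have h0 : Phi n ℝ (f'' (q, t) (Vq (W q t) q t, 1))
          + gradient (fun q' => H (W q t) q' t) q = 0 := by
        apply ext_inner_right ℝ
        intro v
        rw [← hkey, h v, inner_zero_left]
      have := eq_neg_of_add_eq_zero_left h0
      exact this
  -- g agrees with H + St on the graph
  have hg : ∀ (q : Ee n) (t : ℝ), g (q, t) = H (W q t) q t + St q t := by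
    intro q t
    rw [hSt q t]
  -- derivative of g in the q-direction
  have hgq : ∀ (q : Ee n) (t : ℝ), HasFDerivAt (fun q' : Ee n => g (q', t))
      ((G' q t).comp (ContinuousLinearMap.inl ℝ (Ee n) ℝ)) q := by
    intro q t
    have h1 : HasFDerivAt (fun q' : Ee n => (q', t)) (ContinuousLinearMap.inl ℝ (Ee n) ℝ) q := by
      have h : HasFDerivAt (fun q' : Ee n => (q', t))
          ((ContinuousLinearMap.id ℝ (Ee n)).prod (0 : Ee n →L[ℝ] ℝ)) q :=
        HasFDerivAt.prodMk (hasFDerivAt_id q) (hasFDerivAt_const t q)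
      have e : (ContinuousLinearMap.id ℝ (Ee n)).prod (0 : Ee n →L[ℝ] ℝ)
          = ContinuousLinearMap.inl ℝ (Ee n) ℝ := by ext v <;> simp
      rwa [e] at h
    exact (hgfd q t).comp q h1
  constructor
  · constructor
    · -- Invariant → Hamilton–Jacobi
      intro hI
      refine ⟨fun t => g (0, t), fun q t => ?_⟩
      have hzero : ∀ q' : Ee n, fderiv ℝ (fun q' : Ee n => g (q', t)) q' = 0 := by
        intro q'
        rw [(hgq q' t).fderiv]
        ext v
        simp only [ContinuousLinearMap.coe_comp', Function.comp_apply,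
          ContinuousLinearMap.inl_apply, ContinuousLinearMap.zero_apply]
        exact ((hinv_iff q' t).mp (hI q' t)) v
      have hconst : g (q, t) = g (0, t) :=
        is_const_of_fderiv_eq_zero (fun q' => (hgq q' t).differentiableAt) hzero q 0
      rw [← hg q t]
      exact hconst
    · -- Hamilton–Jacobi → Invariant
      rintro ⟨f, hf⟩ q t
      rw [hinv_iff q t]
      intro v
      have hconst : (fun q' : Ee n => g (q', t)) = fun _ => f t := by
        funext q'
        rw [hg q' t, hf q' t]
      have h0 : fderiv ℝ (fun q' : Ee n => g (q', t)) q = 0 := by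
        rw [hconst]; exact fderiv_const_apply (f t)
      have := (hgq q t).fderiv
      rw [h0] at this
      have := congrArg (fun (L : Ee n →L[ℝ] ℝ) => L v) this.symm
      simpa using this
  · -- on the invariant submanifold the flow is Hamiltonian
    intro _ q t
    exact hVp q t
end
end
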